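/- The map y ↦ v̂*(x,y) := [∇_y∇_y l(x,y)]⁻¹ ∇_y f(x,y) is Lipschitz with constant L̄_v := L_{f,1}/μ + C_{fy}·L_{l,2}/μ²: for every x ∈ ℝ^p and all y₁, y₂ ∈ ℝ^q, ‖v̂*(x,y₁) − v̂*(x,y₂)‖ ≤ (L_{f,1}/μ + C_{fy}·L_{l,2}/μ²) · ‖y₁ − y₂‖. -/

import Mathlib

noncomputable section

open scoped RealInnerProductSpace

/-- Partial gradient in the first (upper-level) variable. -/
noncomputable def gradx {p q : ℕ}
    (f : EuclideanSpace ℝ (Fin p) → EuclideanSpace ℝ (Fin q) → ℝ)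
    (x : EuclideanSpace ℝ (Fin p)) (y : EuclideanSpace ℝ (Fin q)) :
    EuclideanSpace ℝ (Fin p) :=
  gradient (fun x' => f x' y) x

/-- Partial gradient in the second (lower-level) variable. -/
noncomputable def grady {p q : ℕ}
    (f : EuclideanSpace ℝ (Fin p) → EuclideanSpace ℝ (Fin q) → ℝ)
    (x : EuclideanSpace ℝ (Fin p)) (y : EuclideanSpace ℝ (Fin q)) :
    EuclideanSpace ℝ (Fin q) :=
  gradient (fun y' => f x y') y

/-- Mixed second derivative `∇ₓ∇_y l (x,y)`, as a continuous linear map `ℝ^q →L ℝ^p`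
(the adjoint of the derivative in `x` of the partial gradient `∇_y l`). -/
noncomputable def hessxy {p q : ℕ}
    (l : EuclideanSpace ℝ (Fin p) → EuclideanSpace ℝ (Fin q) → ℝ)
    (x : EuclideanSpace ℝ (Fin p)) (y : EuclideanSpace ℝ (Fin q)) :
    EuclideanSpace ℝ (Fin q) →L[ℝ] EuclideanSpace ℝ (Fin p) :=
  ContinuousLinearMap.adjoint (fderiv ℝ (fun x' => grady l x' y) x)

/-- Second derivative `∇_y∇_y l (x,y)` in the lower-level variable, as a continuous linear
map `ℝ^q →L ℝ^q`. -/
noncomputable def hessyy {p q : ℕ}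
    (l : EuclideanSpace ℝ (Fin p) → EuclideanSpace ℝ (Fin q) → ℝ)
    (x : EuclideanSpace ℝ (Fin p)) (y : EuclideanSpace ℝ (Fin q)) :
    EuclideanSpace ℝ (Fin q) →L[ℝ] EuclideanSpace ℝ (Fin q) :=
  fderiv ℝ (fun y' => grady l x y') y

/-- Hypergradient surrogate `∇̄f(x,y,v) = ∇ₓ f(x,y) − ∇ₓ∇_y l(x,y) v`. -/
noncomputable def barGradF {p q : ℕ}
    (f l : EuclideanSpace ℝ (Fin p) → EuclideanSpace ℝ (Fin q) → ℝ)
    (x : EuclideanSpace ℝ (Fin p)) (y v : EuclideanSpace ℝ (Fin q)) :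
    EuclideanSpace ℝ (Fin p) :=
  gradx f x y - hessxy l x y v

/-- Gradient of the auxiliary quadratic objective:
`∇_v r(x,y,v) = ∇_y∇_y l(x,y) v − ∇_y f(x,y)`. -/
noncomputable def gradvR {p q : ℕ}
    (f l : EuclideanSpace ℝ (Fin p) → EuclideanSpace ℝ (Fin q) → ℝ)
    (x : EuclideanSpace ℝ (Fin p)) (y v : EuclideanSpace ℝ (Fin q)) :
    EuclideanSpace ℝ (Fin q) :=
  hessyy l x y v - grady f x y

/-! Strong convexity of `l x` makes each Hessian `∇_y∇_y l(x,y)` coercive with constant `μ`: along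
a line, `l x - μ/2 ‖·‖²` is a convex function of one variable, so its second derivative
`⟪∇_y∇_y l(x,y) v, v⟫ - μ‖v‖²` is nonnegative. By Lax–Milgram such an operator is invertible with
inverse of norm at most `1/μ`. The resolvent identity `A⁻¹a - B⁻¹b = A⁻¹(a - b) + A⁻¹(B - A)B⁻¹b`
then bounds the two terms by `L_{f,1}‖y₁ - y₂‖/μ` and `(L_{l,2}‖y₁ - y₂‖/μ)(C_{fy}/μ)`. -/

open Set

section Coercive

variable {E : Type*} [NormedAddCommGroup E] [InnerProductSpace ℝ E]

theorem ContinuousLinearMap.mul_norm_le_norm_apply_of_coercive {T : E →L[ℝ] E} {μ : ℝ}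
    (hT : ∀ v, μ * ‖v‖ ^ 2 ≤ ⟪T v, v⟫) (v : E) : μ * ‖v‖ ≤ ‖T v‖ := by
  rcases (norm_nonneg v).eq_or_lt with hv | hv
  · simp [← hv]
  · have := (hT v).trans (real_inner_le_norm _ _)
    nlinarith

variable [CompleteSpace E]

theorem ContinuousLinearMap.isUnit_of_coercive {T : E →L[ℝ] E} {μ : ℝ} (hμ : 0 < μ)
    (hT : ∀ v, μ * ‖v‖ ^ 2 ≤ ⟪T v, v⟫) : IsUnit T := by
  have hB : IsCoercive ((innerSL ℝ).comp T) :=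
    ⟨μ, hμ, fun v => by simpa [sq, mul_assoc] using hT v⟩
  have hT_eq : (hB.continuousLinearEquivOfBilin : E →L[ℝ] E) = T :=
    ext fun v => ext_inner_right ℝ fun w => by simp
  exact hT_eq ▸ hB.continuousLinearEquivOfBilin.toUnit.isUnit

theorem ContinuousLinearMap.norm_inverse_le_of_coercive {T : E →L[ℝ] E} {μ : ℝ} (hμ : 0 < μ)
    (hT : ∀ v, μ * ‖v‖ ^ 2 ≤ ⟪T v, v⟫) : ‖Ring.inverse T‖ ≤ μ⁻¹ := by
  refine opNorm_le_bound _ (by positivity) fun w => ?_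
  have hw : T (Ring.inverse T w) = w := by
    change (T * Ring.inverse T) w = w
    rw [Ring.mul_inverse_cancel T (isUnit_of_coercive hμ hT), one_apply_eq_self]
  have := mul_norm_le_norm_apply_of_coercive hT (Ring.inverse T w)
  rw [hw] at this
  rwa [inv_mul_eq_div, le_div_iff₀ hμ, mul_comm]

end Coercive

theorem ContinuousLinearMap.norm_inverse_apply_sub_inverse_apply_le {𝕜 E : Type*}
    [NontriviallyNormedField 𝕜] [NormedAddCommGroup E] [NormedSpace 𝕜 E] {A B : E →L[𝕜] E}
    (hAB : IsUnit A ↔ IsUnit B) (a b : E) :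
    ‖Ring.inverse A a - Ring.inverse B b‖ ≤
      ‖Ring.inverse A‖ * ‖a - b‖ + ‖Ring.inverse A‖ * ‖B - A‖ * ‖Ring.inverse B‖ * ‖b‖ := by
  have hsplit : Ring.inverse A a - Ring.inverse B b =
      Ring.inverse A (a - b) + (Ring.inverse A * (B - A) * Ring.inverse B) b := by
    rw [← Ring.inverse_sub_inverse hAB, map_sub, sub_apply]
    abel
  rw [hsplit]
  refine (norm_add_le _ _).trans (add_le_add (le_opNorm _ _) ?_)
  calc ‖(Ring.inverse A * (B - A) * Ring.inverse B) b‖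
      ≤ ‖Ring.inverse A * (B - A) * Ring.inverse B‖ * ‖b‖ := le_opNorm _ _
    _ ≤ ‖Ring.inverse A‖ * ‖B - A‖ * ‖Ring.inverse B‖ * ‖b‖ := by
      refine mul_le_mul_of_nonneg_right ((norm_mul_le _ _).trans ?_) (norm_nonneg b)
      exact mul_le_mul_of_nonneg_right (norm_mul_le _ _) (norm_nonneg _)

theorem ConvexOn.nonneg_of_hasDerivAt_deriv {φ D : ℝ → ℝ} {d t₀ : ℝ} (hφ : ConvexOn ℝ univ φ)
    (hφD : ∀ t, HasDerivAt φ (D t) t) (hD : HasDerivAt D d t₀) : 0 ≤ d := by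
  have hmono : Monotone D := by
    have := hφ.monotoneOn_deriv fun t _ => (hφD t).differentiableAt
    rwa [funext fun t => (hφD t).deriv, monotoneOn_univ] at this
  exact hD.deriv ▸ hmono.deriv_nonneg

section Gradient

variable {E : Type*} [NormedAddCommGroup E] [InnerProductSpace ℝ E] [CompleteSpace E]

theorem ContDiff.gradient {g : E → ℝ} {n : WithTop ℕ∞} (hg : ContDiff ℝ (n + 1) g) :
    ContDiff ℝ n (gradient g) :=
  (InnerProductSpace.toDual ℝ E).symm.toContinuousLinearEquiv.contDiff.comp
    (hg.fderiv_right le_rfl)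

theorem StrongConvexOn.mul_norm_sq_le_inner_fderiv_gradient {g : E → ℝ} {μ : ℝ}
    (hg : StrongConvexOn univ μ g) (hgd : Differentiable ℝ g) {y : E}
    (hgrad : DifferentiableAt ℝ (gradient g) y) (v : E) :
    μ * ‖v‖ ^ 2 ≤ ⟪fderiv ℝ (gradient g) y v, v⟫ := by
  set c : ℝ → E := fun t => y + t • v
  have hc : ∀ t, HasDerivAt c v t := fun t => by
    simpa only [id, one_smul] using ((hasDerivAt_id t).smul_const v).const_add y
  have hconv : ConvexOn ℝ univ fun t => g (c t) - μ / 2 * ‖c t‖ ^ 2 := by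
    have := (strongConvexOn_iff_convex.mp hg).comp_affineMap (AffineMap.lineMap y (y + v))
    have hline : ∀ t, AffineMap.lineMap y (y + v) t = c t := fun t => by
      simp [AffineMap.lineMap_apply_module', c, add_comm]
    simpa [Function.comp_def, hline] using this
  have hderiv : ∀ t, HasDerivAt (fun t => g (c t) - μ / 2 * ‖c t‖ ^ 2)
      (⟪gradient g (c t), v⟫ - μ * ⟪c t, v⟫) t := fun t => by
    have hgc : HasDerivAt (fun t => g (c t)) ⟪gradient g (c t), v⟫ t := by
      have := (hgd (c t)).hasFDerivAt.comp_hasDerivAt t (hc t)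
      rwa [← InnerProductSpace.toDual_symm_apply] at this
    exact (hgc.sub (((hc t).norm_sq).const_mul (μ / 2))).congr_deriv (by ring)
  have hderiv2 : HasDerivAt (fun t => ⟪gradient g (c t), v⟫ - μ * ⟪c t, v⟫)
      (⟪fderiv ℝ (gradient g) y v, v⟫ - μ * ‖v‖ ^ 2) 0 := by
    have hH : HasDerivAt (fun t => gradient g (c t)) (fderiv ℝ (gradient g) y v) 0 := by
      have hF : HasFDerivAt (gradient g) (fderiv ℝ (gradient g) y) (c 0) := by
        simpa [c] using hgrad.hasFDerivAt
      exact hF.comp_hasDerivAt 0 (hc 0)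
    exact ((hH.inner ℝ (hasDerivAt_const 0 v)).sub
      (((hc 0).inner ℝ (hasDerivAt_const 0 v)).const_mul μ)).congr_deriv (by simp)
  linarith [hconv.nonneg_of_hasDerivAt_deriv hderiv hderiv2]

end Gradient

theorem auxiliary_solution_lipschitz_in_y_general
    {p q : ℕ} (f l : EuclideanSpace ℝ (Fin p) → EuclideanSpace ℝ (Fin q) → ℝ)
    (μ Lf1 Ll2 Cfy : ℝ) (hμ : 0 < μ)
    (hlC2 : ContDiff ℝ 2 (fun pr : EuclideanSpace ℝ (Fin p) × EuclideanSpace ℝ (Fin q) =>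
      l pr.1 pr.2))
    (hsc : ∀ x, StrongConvexOn Set.univ μ (l x))
    (hLfy : ∀ x₁ y₁ x₂ y₂, ‖grady f x₁ y₁ - grady f x₂ y₂‖ ≤ Lf1 * (‖x₁ - x₂‖ + ‖y₁ - y₂‖))
    (hLyy : ∀ x₁ y₁ x₂ y₂, ‖hessyy l x₁ y₁ - hessyy l x₂ y₂‖ ≤ Ll2 * (‖x₁ - x₂‖ + ‖y₁ - y₂‖))
    (hCfy : ∀ x y, ‖grady f x y‖ ≤ Cfy) :
    ∀ x y₁ y₂,
      ‖Ring.inverse (hessyy l x y₁) (grady f x y₁) -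
          Ring.inverse (hessyy l x y₂) (grady f x y₂)‖ ≤
        (Lf1 / μ + Cfy * Ll2 / μ ^ 2) * ‖y₁ - y₂‖ := by
  intro x y₁ y₂
  have hl : ContDiff ℝ 2 (l x) := hlC2.comp (contDiff_const.prodMk contDiff_id)
  have hcoer : ∀ y v, μ * ‖v‖ ^ 2 ≤ ⟪hessyy l x y v, v⟫ := fun y =>
    (hsc x).mul_norm_sq_le_inner_fderiv_gradient (hl.differentiable two_ne_zero)
      ((hl.gradient (n := 1)).differentiable one_ne_zero y)
  have hunit : ∀ y, IsUnit (hessyy l x y) := fun y =>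
    ContinuousLinearMap.isUnit_of_coercive hμ (hcoer y)
  have hinv : ∀ y, ‖Ring.inverse (hessyy l x y)‖ ≤ μ⁻¹ := fun y =>
    ContinuousLinearMap.norm_inverse_le_of_coercive hμ (hcoer y)
  have hgrady : ‖grady f x y₁ - grady f x y₂‖ ≤ Lf1 * ‖y₁ - y₂‖ := by
    simpa using hLfy x y₁ x y₂
  have hhessyy : ‖hessyy l x y₂ - hessyy l x y₁‖ ≤ Ll2 * ‖y₁ - y₂‖ := by
    simpa [norm_sub_rev y₂] using hLyy x y₂ x y₁
  calc _ ≤ _ := ContinuousLinearMap.norm_inverse_apply_sub_inverse_apply_le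
          (iff_of_true (hunit y₁) (hunit y₂)) _ _
    _ ≤ μ⁻¹ * (Lf1 * ‖y₁ - y₂‖) + μ⁻¹ * (Ll2 * ‖y₁ - y₂‖) * μ⁻¹ * Cfy := by
      have hLl2 : 0 ≤ Ll2 * ‖y₁ - y₂‖ := (norm_nonneg _).trans hhessyy
      gcongr
      exacts [hinv y₁, hinv y₁, hinv y₂, hCfy x y₂]
    _ = (Lf1 / μ + Cfy * Ll2 / μ ^ 2) * ‖y₁ - y₂‖ := by
      field_simp

/-- **Lemma C.3 part 7 (second half)**: the map `y ↦ v̂*(x,y) = [∇_y∇_y l(x,y)]⁻¹ ∇_y f(x,y)`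
is `(L_{f,1}/μ + C_{fy}L_{l,2}/μ²)`-Lipschitz. -/
theorem auxiliary_solution_lipschitz_in_y
    {p q : ℕ} (f l : EuclideanSpace ℝ (Fin p) → EuclideanSpace ℝ (Fin q) → ℝ)
    (μ Lf1 Ll2 Cfy : ℝ) (hμ : 0 < μ)
    (hfC2 : ContDiff ℝ 2 (fun pr : EuclideanSpace ℝ (Fin p) × EuclideanSpace ℝ (Fin q) =>
      f pr.1 pr.2))
    (hlC2 : ContDiff ℝ 2 (fun pr : EuclideanSpace ℝ (Fin p) × EuclideanSpace ℝ (Fin q) =>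
      l pr.1 pr.2))
    (hsc : ∀ x, StrongConvexOn Set.univ μ (l x))
    (hLfx : ∀ x₁ y₁ x₂ y₂, ‖gradx f x₁ y₁ - gradx f x₂ y₂‖ ≤ Lf1 * (‖x₁ - x₂‖ + ‖y₁ - y₂‖))
    (hLfy : ∀ x₁ y₁ x₂ y₂, ‖grady f x₁ y₁ - grady f x₂ y₂‖ ≤ Lf1 * (‖x₁ - x₂‖ + ‖y₁ - y₂‖))
    (hLyy : ∀ x₁ y₁ x₂ y₂, ‖hessyy l x₁ y₁ - hessyy l x₂ y₂‖ ≤ Ll2 * (‖x₁ - x₂‖ + ‖y₁ - y₂‖))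
    (hCfy : ∀ x y, ‖grady f x y‖ ≤ Cfy) :
    ∀ x y₁ y₂,
      ‖Ring.inverse (hessyy l x y₁) (grady f x y₁) -
          Ring.inverse (hessyy l x y₂) (grady f x y₂)‖ ≤
        (Lf1 / μ + Cfy * Ll2 / μ ^ 2) * ‖y₁ - y₂‖ :=
  auxiliary_solution_lipschitz_in_y_general f l μ Lf1 Ll2 Cfy hμ hlC2 hsc hLfy hLyy hCfy
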